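/- arXiv:2103.02314 — 4 statements merged into one kernel-verified Lean document; each statement's English description precedes it below -/
import Mathlib

section
/- Let K ⊆ ℝ^{n+1} be a closed convex set and Σ = {x : x_{n+1} = 0} a hyperplane. If K is contained in the R-neighborhood D(Σ, R) of Σ for some R ≥ 0, and Σ ⊆ K, then K = Σ × I for some closed interval I ⊆ [-R, R]. -/
open Filter Set Topology

section ClosedConvex

variable {E : Type*} [AddCommGroup E] [Module ℝ E] [TopologicalSpace E]
  [IsTopologicalAddGroup E] [ContinuousSMul ℝ E]

/-- `v + θ • x = (1 - θ) • ((1 - θ)⁻¹ • v) + θ • x` lies in `K` for `θ ∈ (0, 1)`; let `θ → 1`. -/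
theorem Convex.add_mem_of_isClosed_of_submodule_subset {K : Set E} (hconv : Convex ℝ K)
    (hclosed : IsClosed K) {V : Submodule ℝ E} (hV : (V : Set E) ⊆ K) {x v : E}
    (hx : x ∈ K) (hv : v ∈ V) : x + v ∈ K := by
  have hseg : ∀ θ ∈ Ioo (0 : ℝ) 1, v + θ • x ∈ K := by
    intro θ ⟨hθ0, hθ1⟩
    have hpos : 0 < 1 - θ := sub_pos.mpr hθ1
    have hv' : (1 - θ)⁻¹ • v ∈ K := hV (V.smul_mem _ hv)
    convert hconv hv' hx hpos.le hθ0.le (by ring) using 1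
    rw [smul_smul, mul_inv_cancel₀ hpos.ne', one_smul]
  have hlim : Tendsto (fun θ : ℝ => v + θ • x) (𝓝[<] 1) (𝓝 (x + v)) := by
    have hcont : Continuous (fun θ : ℝ => v + θ • x) := by fun_prop
    simpa [add_comm] using (hcont.tendsto 1).mono_left nhdsWithin_le_nhds
  exact hclosed.mem_of_tendsto hlim (mem_of_superset (Ioo_mem_nhdsLT zero_lt_one) hseg)

theorem Convex.eq_univ_prod_of_isClosed_of_zero_section_subset
    {F : Type*} [AddCommGroup F] [Module ℝ F] [TopologicalSpace F]
    [IsTopologicalAddGroup F] [ContinuousSMul ℝ F]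
    {K : Set (E × F)} (hconv : Convex ℝ K) (hclosed : IsClosed K)
    (hK : {p : E × F | p.2 = 0} ⊆ K) :
    K = univ ×ˢ {t : F | ((0 : E), t) ∈ K} := by
  let V := LinearMap.ker (LinearMap.snd ℝ E F)
  have hV : (V : Set (E × F)) ⊆ K := hK
  have shift : ∀ {x : E} {t : F} (y : E), (x, t) ∈ K → (y, t) ∈ K := by
    intro x t y h
    simpa using hconv.add_mem_of_isClosed_of_submodule_subset hclosed hV h
      (v := (y - x, 0)) (by simp [V])
  ext ⟨x, t⟩
  simpa using ⟨shift 0, shift x⟩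

end ClosedConvex

theorem slab_convex_splitting_general {n : ℕ} (R : ℝ)
    (K : Set ((EuclideanSpace ℝ (Fin n)) × ℝ))
    (hclosed : IsClosed K) (hconv : Convex ℝ K)
    (hsub : K ⊆ {p | |p.2| ≤ R})
    (hSigma : {p : (EuclideanSpace ℝ (Fin n)) × ℝ | p.2 = 0} ⊆ K) :
    K = Set.univ ×ˢ {t : ℝ | ((0 : EuclideanSpace ℝ (Fin n)), t) ∈ K} ∧
      IsClosed {t : ℝ | ((0 : EuclideanSpace ℝ (Fin n)), t) ∈ K} ∧
      ({t : ℝ | ((0 : EuclideanSpace ℝ (Fin n)), t) ∈ K}).OrdConnected ∧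
      {t : ℝ | ((0 : EuclideanSpace ℝ (Fin n)), t) ∈ K} ⊆ Set.Icc (-R) R := by
  refine ⟨hconv.eq_univ_prod_of_isClosed_of_zero_section_subset hclosed hSigma,
    hclosed.preimage (Continuous.prodMk_right 0),
    (hconv.linear_preimage (LinearMap.inr ℝ _ ℝ)).ordConnected,
    fun _ ht => abs_le.mp (hsub ht)⟩

/-- A closed convex set `K ⊆ ℝⁿ × ℝ` contained in the `R`-neighborhood of the
hyperplane `Σ = ℝⁿ × {0}` and containing `Σ` is of the form `Σ × I` for a closed
interval `I ⊆ [-R, R]`. -/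
theorem slab_convex_splitting {n : ℕ} (R : ℝ) (hR : 0 ≤ R)
    (K : Set ((EuclideanSpace ℝ (Fin n)) × ℝ))
    (hclosed : IsClosed K) (hconv : Convex ℝ K)
    (hsub : K ⊆ {p | |p.2| ≤ R})
    (hSigma : {p : (EuclideanSpace ℝ (Fin n)) × ℝ | p.2 = 0} ⊆ K) :
    K = Set.univ ×ˢ {t : ℝ | ((0 : EuclideanSpace ℝ (Fin n)), t) ∈ K} ∧
      IsClosed {t : ℝ | ((0 : EuclideanSpace ℝ (Fin n)), t) ∈ K} ∧
      ({t : ℝ | ((0 : EuclideanSpace ℝ (Fin n)), t) ∈ K}).OrdConnected ∧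
      {t : ℝ | ((0 : EuclideanSpace ℝ (Fin n)), t) ∈ K} ⊆ Set.Icc (-R) R :=
  slab_convex_splitting_general R K hclosed hconv hsub hSigma
end

section
/- Let Ω ⊆ ℝ^{n+1} be a convex open set containing the closed ball B(p, r), and let x ∈ ∂Ω with ν the outward unit normal to Ω at x (i.e., Ω ⊆ {y : (y − x)·ν ≤ 0}). Then ν · (x − p)/|x − p| ≥ r/√(r² + |x − p|²). -/
/-! The support inequality applied to the point `p + r • ν` of the ball gives `r ≤ ⟪ν, x - p⟫`;
dividing by `‖x - p‖ ≤ √(r² + ‖x - p‖²)` finishes the proof. -/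

theorem le_inner_sub_of_closedBall_subset {E : Type*} [NormedAddCommGroup E]
    [InnerProductSpace ℝ E] {s : Set E} {p x ν : E} {r : ℝ} (hr : 0 ≤ r)
    (hball : Metric.closedBall p r ⊆ s) (hν : ‖ν‖ = 1)
    (hsupport : ∀ y ∈ s, inner ℝ (y - x) ν ≤ 0) :
    r ≤ inner ℝ ν (x - p) := by
  have hmem : p + r • ν ∈ s :=
    hball <| by simp [Metric.mem_closedBall, norm_smul, hν, abs_of_nonneg hr]
  have hexpand : inner ℝ (p + r • ν - x) ν = r - inner ℝ ν (x - p) := by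
    rw [show p + r • ν - x = r • ν - (x - p) by abel, inner_sub_left, real_inner_smul_left,
      real_inner_self_eq_norm_sq, hν, real_inner_comm]
    ring
  linarith [hsupport _ hmem]

theorem div_sqrt_sq_add_sq_le_div {r d a : ℝ} (hr : 0 ≤ r) (hd : 0 < d) (hra : r ≤ a) :
    r / Real.sqrt (r ^ 2 + d ^ 2) ≤ a / d := by
  have hsqrt : d ≤ Real.sqrt (r ^ 2 + d ^ 2) :=
    Real.le_sqrt_of_sq_le (by nlinarith)
  calc r / Real.sqrt (r ^ 2 + d ^ 2) ≤ r / d := div_le_div_of_nonneg_left hr hd hsqrt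
    _ ≤ a / d := by gcongr

theorem outward_normal_radial_bound_general {n : ℕ}
    (Ω : Set (EuclideanSpace ℝ (Fin (n + 1))))
    (p : EuclideanSpace ℝ (Fin (n + 1))) (r : ℝ) (hr : 0 < r)
    (hball : Metric.closedBall p r ⊆ Ω)
    (x : EuclideanSpace ℝ (Fin (n + 1))) (hxp : x ≠ p)
    (ν : EuclideanSpace ℝ (Fin (n + 1))) (hν : ‖ν‖ = 1)
    (hsupport : ∀ y ∈ Ω, (inner ℝ (y - x) ν : ℝ) ≤ 0) :
    r / Real.sqrt (r ^ 2 + ‖x - p‖ ^ 2) ≤ (inner ℝ ν (x - p) : ℝ) / ‖x - p‖ :=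
  div_sqrt_sq_add_sq_le_div hr.le (norm_pos_iff.2 (sub_ne_zero.2 hxp))
    (le_inner_sub_of_closedBall_subset hr.le hball hν hsupport)

/-- If an open convex set `Ω ⊆ ℝ^{n+1}` contains the closed ball `B(p,r)` and
`ν` is an outward unit normal to `Ω` at a boundary point `x ≠ p`, then
`⟪ν, (x-p)/|x-p|⟫ ≥ r / √(r² + |x-p|²)`. -/
theorem outward_normal_radial_bound {n : ℕ}
    (Ω : Set (EuclideanSpace ℝ (Fin (n + 1)))) (hopen : IsOpen Ω) (hconv : Convex ℝ Ω)
    (p : EuclideanSpace ℝ (Fin (n + 1))) (r : ℝ) (hr : 0 < r)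
    (hball : Metric.closedBall p r ⊆ Ω)
    (x : EuclideanSpace ℝ (Fin (n + 1))) (hx : x ∈ frontier Ω) (hxp : x ≠ p)
    (ν : EuclideanSpace ℝ (Fin (n + 1))) (hν : ‖ν‖ = 1)
    (hsupport : ∀ y ∈ Ω, (inner ℝ (y - x) ν : ℝ) ≤ 0) :
    r / Real.sqrt (r ^ 2 + ‖x - p‖ ^ 2) ≤ (inner ℝ ν (x - p) : ℝ) / ‖x - p‖ :=
  outward_normal_radial_bound_general Ω p r hr hball x hxp ν hν hsupport
end

section
/- Let Ω ⊆ ℝ^{n+1} be open convex with B(p, r) ⊆ Ω, let L > 1, and let x ∈ ∂Ω with |x − p| ≤ 2Lr. Then any outward unit normal ν at x satisfies ν · (x − p)/|x − p| ≥ 1/√(1 + 4L²). -/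
/-!
The point `p + r • ν` of the ball lies in `Ω`, so the supporting half-space at `x` gives
`r ≤ ⟪ν, x - p⟫`, while `‖x - p‖ ≤ 2 * L * r ≤ √(1 + 4 * L ^ 2) * r`.
-/

open Metric RealInnerProductSpace

section

variable {E : Type*} [NormedAddCommGroup E] [InnerProductSpace ℝ E]

theorem radius_le_inner_of_closedBall_subset {Ω : Set E} {p x ν : E} {r : ℝ} (hr : 0 ≤ r)
    (hball : closedBall p r ⊆ Ω) (hν : ‖ν‖ = 1) (hsupport : ∀ y ∈ Ω, ⟪y - x, ν⟫ ≤ 0) :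
    r ≤ ⟪ν, x - p⟫ := by
  have hy : p + r • ν ∈ Ω := hball (by simp [norm_smul, hν, abs_of_nonneg hr])
  have hinner : ⟪p + r • ν - x, ν⟫ = r - ⟪ν, x - p⟫ := by
    rw [show p + r • ν - x = r • ν - (x - p) by abel, inner_sub_left, real_inner_smul_left,
      real_inner_self_eq_norm_sq, hν, real_inner_comm]
    ring
  linarith [hsupport _ hy]

end

theorem outward_normal_angle_bound_general {n : ℕ}
    (Ω : Set (EuclideanSpace ℝ (Fin (n + 1))))
    (p : EuclideanSpace ℝ (Fin (n + 1))) (r L : ℝ) (hr : 0 < r)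
    (hball : Metric.closedBall p r ⊆ Ω)
    (x : EuclideanSpace ℝ (Fin (n + 1)))
    (hdist : ‖x - p‖ ≤ 2 * L * r)
    (ν : EuclideanSpace ℝ (Fin (n + 1))) (hν : ‖ν‖ = 1)
    (hsupport : ∀ y ∈ Ω, (inner ℝ (y - x) ν : ℝ) ≤ 0) :
    1 / Real.sqrt (1 + 4 * L ^ 2) ≤ (inner ℝ ν (x - p) : ℝ) / ‖x - p‖ := by
  have hinner : r ≤ ⟪ν, x - p⟫ := radius_le_inner_of_closedBall_subset hr.le hball hν hsupport
  have hnorm : 0 < ‖x - p‖ :=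
    hr.trans_le (hinner.trans (by simpa [hν] using real_inner_le_norm ν (x - p)))
  have hsqrt : 2 * L ≤ √(1 + 4 * L ^ 2) := Real.le_sqrt_of_sq_le (by nlinarith)
  have hdist' : ‖x - p‖ ≤ √(1 + 4 * L ^ 2) * r :=
    hdist.trans (mul_le_mul_of_nonneg_right hsqrt hr.le)
  calc 1 / √(1 + 4 * L ^ 2) = r / (√(1 + 4 * L ^ 2) * r) := by field_simp
    _ ≤ ⟪ν, x - p⟫ / ‖x - p‖ := div_le_div₀ (hr.le.trans hinner) hinner hnorm hdist'

/-- If an open convex set `Ω ⊆ ℝ^{n+1}` contains the closed ball `B(p,r)`,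
`L > 1`, and `x` is a boundary point with `|x-p| ≤ 2Lr`, then any outward unit normal
`ν` at `x` satisfies `⟪ν, (x-p)/|x-p|⟫ ≥ 1/√(1 + 4L²)`. -/
theorem outward_normal_angle_bound {n : ℕ}
    (Ω : Set (EuclideanSpace ℝ (Fin (n + 1)))) (hopen : IsOpen Ω) (hconv : Convex ℝ Ω)
    (p : EuclideanSpace ℝ (Fin (n + 1))) (r L : ℝ) (hr : 0 < r) (hL : 1 < L)
    (hball : Metric.closedBall p r ⊆ Ω)
    (x : EuclideanSpace ℝ (Fin (n + 1))) (hx : x ∈ frontier Ω) (hxp : x ≠ p)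
    (hdist : ‖x - p‖ ≤ 2 * L * r)
    (ν : EuclideanSpace ℝ (Fin (n + 1))) (hν : ‖ν‖ = 1)
    (hsupport : ∀ y ∈ Ω, (inner ℝ (y - x) ν : ℝ) ≤ 0) :
    1 / Real.sqrt (1 + 4 * L ^ 2) ≤ (inner ℝ ν (x - p) : ℝ) / ‖x - p‖ :=
  outward_normal_angle_bound_general Ω p r L hr hball x hdist ν hν hsupport
end

section
/- Let γ be positive, homogeneous of degree one, and monotone increasing in each argument on a cone Γ containing (0,…,0,1,…,1) (with m zeros). For the translating paraboloid barrier with c = γ(0,…,0,1,…,1)⁻¹, at each point the normal speed of translation satisfies |∂_t F · ν| = 1/√(1 + c²|x'|²) ≤ γ(λ), where λ are the principal curvatures listed in the previous lemma. -/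
/-! Both `λ` and `e_m` vanish in their first `m - 1` entries and equal `1` after the `m`-th,
while the `m`-th entry of `λ` is `1 - s/(1+s) ≥ 0`; so `λ ≥ (c/√(1+s)) • e_m` entrywise.
Monotonicity and homogeneity then give `γ(λ) ≥ (c/√(1+s)) γ(e_m) = 1/√(1+s)`. -/

lemma homogeneous_monotone_mul_le_of_mul_le {ι : Type*} {Γ : Set (ι → ℝ)}
    {γ : (ι → ℝ) → ℝ}
    (hcone : ∀ (a : ℝ), 0 < a → ∀ l ∈ Γ, a • l ∈ Γ)
    (hhom : ∀ (a : ℝ), 0 < a → ∀ l ∈ Γ, γ (a • l) = a * γ l)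
    (hmono : ∀ l ∈ Γ, ∀ l' ∈ Γ, (∀ i, l i ≤ l' i) → γ l ≤ γ l')
    {a : ℝ} (ha : 0 < a) {l l' : ι → ℝ} (hl : l ∈ Γ) (hl' : l' ∈ Γ)
    (hle : ∀ i, a * l i ≤ l' i) :
    a * γ l ≤ γ l' :=
  hhom a ha l hl ▸ hmono _ (hcone a ha l hl) _ hl' hle

lemma cylinder_entry_le_barrier_entry {m k : ℕ} (hm : 1 ≤ m) {s : ℝ} (hs : 0 ≤ s) :
    (if k < m then (0 : ℝ) else 1) ≤
      if k < m - 1 then 0 else if k = m - 1 then 1 - s / (1 + s) else 1 := by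
  have hmid : 0 ≤ 1 - s / (1 + s) := sub_nonneg.2 (div_le_one_of_le₀ (by linarith) (by linarith))
  by_cases hk : k < m - 1
  · simp [hk, show k < m by omega]
  by_cases hk' : k = m - 1
  · simpa [hk, hk', show m - 1 < m by omega] using hmid
  · simp [hk, hk', show ¬k < m by omega]

theorem barrier_speed_bound_general {n m : ℕ} (hm : 1 ≤ m)
    (Γ : Set (Fin n → ℝ))
    (hcone : ∀ (a : ℝ), 0 < a → ∀ l ∈ Γ, a • l ∈ Γ)
    (γ : (Fin n → ℝ) → ℝ)
    (hpos : ∀ l ∈ Γ, 0 < γ l)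
    (hhom : ∀ (a : ℝ), 0 < a → ∀ l ∈ Γ, γ (a • l) = a * γ l)
    (hmono : ∀ l ∈ Γ, ∀ l' ∈ Γ, (∀ i, l i ≤ l' i) → γ l ≤ γ l')
    (em : Fin n → ℝ) (hem : ∀ i : Fin n, em i = if (i : ℕ) < m then 0 else 1)
    (hemΓ : em ∈ Γ)
    (c : ℝ) (hcdef : c = (γ em)⁻¹)
    (s : ℝ) (hs : 0 ≤ s)
    (lam : Fin n → ℝ)
    (hlam : ∀ i : Fin n, lam i = c / Real.sqrt (1 + s) *
      (if (i : ℕ) < m - 1 then 0 else if (i : ℕ) = m - 1 then 1 - s / (1 + s) else 1))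
    (hlamΓ : lam ∈ Γ) :
    1 / Real.sqrt (1 + s) ≤ γ lam := by
  have hγem := hpos em hemΓ
  have ha : 0 < c / Real.sqrt (1 + s) := by rw [hcdef]; positivity
  calc 1 / Real.sqrt (1 + s) = c / Real.sqrt (1 + s) * γ em := by
        rw [hcdef]; field_simp
    _ ≤ γ lam := homogeneous_monotone_mul_le_of_mul_le hcone hhom hmono ha hemΓ hlamΓ
        fun i => by
          rw [hem, hlam]
          exact mul_le_mul_of_nonneg_left (cylinder_entry_le_barrier_entry hm hs) ha.le

/-- Translating paraboloid barrier speed bound.  Let `γ` be positive,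
one-homogeneous and monotone on a cone `Γ` containing the cylindrical point
`e_m = (0,…,0,1,…,1)` (with `m` zeros), and set `c := γ(e_m)⁻¹`.  At a point of the
barrier with `s = c²|x'|²`, the principal curvature vector is
`λ = (c/√(1+s))·(0,…,0, 1 − s/(1+s), 1,…,1)` (with `m-1` zeros); if `λ ∈ Γ` then the
normal translation speed `1/√(1+s)` does not exceed `γ(λ)`. -/
theorem barrier_speed_bound {n m : ℕ} (hm : 1 ≤ m) (hmn : m ≤ n - 1)
    (Γ : Set (Fin n → ℝ))
    (hcone : ∀ (a : ℝ), 0 < a → ∀ l ∈ Γ, a • l ∈ Γ)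
    (γ : (Fin n → ℝ) → ℝ)
    (hpos : ∀ l ∈ Γ, 0 < γ l)
    (hhom : ∀ (a : ℝ), 0 < a → ∀ l ∈ Γ, γ (a • l) = a * γ l)
    (hmono : ∀ l ∈ Γ, ∀ l' ∈ Γ, (∀ i, l i ≤ l' i) → γ l ≤ γ l')
    (em : Fin n → ℝ) (hem : ∀ i : Fin n, em i = if (i : ℕ) < m then 0 else 1)
    (hemΓ : em ∈ Γ)
    (c : ℝ) (hcdef : c = (γ em)⁻¹)
    (s : ℝ) (hs : 0 ≤ s)
    (lam : Fin n → ℝ)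
    (hlam : ∀ i : Fin n, lam i = c / Real.sqrt (1 + s) *
      (if (i : ℕ) < m - 1 then 0 else if (i : ℕ) = m - 1 then 1 - s / (1 + s) else 1))
    (hlamΓ : lam ∈ Γ) :
    1 / Real.sqrt (1 + s) ≤ γ lam :=
  barrier_speed_bound_general hm Γ hcone γ hpos hhom hmono em hem hemΓ c hcdef s hs lam hlam hlamΓ
end
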